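/- arXiv:1412.5456 — 2 statements merged into one kernel-verified Lean document; each statement's English description precedes it below -/
import Mathlib

section
/- Let ν, α, β, δ, r > 0 with ν(α+β+δ) < 1 and r < α+β, and let c < ν(r+δ). Then there exist d₀ < 0, κ₁ > 0, and κ₂ > 0 such that, with κ(x) = c + κ₁e^{κ₂x} and π₀ = 1 - r·d₀: (i) d₀(r - κ(π₀)/ν + δ) + κ(π₀) - 1 = 0; (ii) κ(π₀) - ν(α+β+δ) < 0; (iii) ν(r+δ) - κ(π₀) + r(d₀ - ν)κ₁κ₂e^{κ₂π₀} < 0. -/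
/-!
Fix the value `K = κ(π₀)` first, strictly between `ν(r+δ)` and `ν(α+β+δ)`; this forces `K < 1`
and `K / ν > r + δ`. Equation (i) is then linear in `d₀` with negative slope and negative
right-hand side `K - 1`, so its solution `d₀` is negative. Whatever `π₀` this gives, `κ₁` is tuned
so that `κ(π₀) = K`, which is possible because `K > c`. Condition (ii) is `K < ν(α+β+δ)`, and in
(iii) both `ν(r+δ) - K` and `r(d₀ - ν)κ'(π₀)` are negative.
-/

open Real

lemma exists_pos_add_mul_exp_eq {c K : ℝ} (hcK : c < K) (κ₂ x : ℝ) :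
    ∃ κ₁, 0 < κ₁ ∧ c + κ₁ * exp (κ₂ * x) = K :=
  ⟨(K - c) / exp (κ₂ * x), div_pos (sub_pos.2 hcK) (exp_pos _), by field_simp; ring⟩

theorem stmt_5_general (ν α β δ r c : ℝ) (hν : 0 < ν)
    (hr : 0 < r) (h1 : ν * (α + β + δ) < 1) (h2 : r < α + β)
    (hc : c < ν * (r + δ)) :
    ∃ d₀ κ₁ κ₂ : ℝ, d₀ < 0 ∧ 0 < κ₁ ∧ 0 < κ₂ ∧
      (let κ : ℝ → ℝ := fun x => c + κ₁ * Real.exp (κ₂ * x)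
       let π₀ : ℝ := 1 - r * d₀
       d₀ * (r - κ π₀ / ν + δ) + κ π₀ - 1 = 0 ∧
       κ π₀ - ν * (α + β + δ) < 0 ∧
       ν * (r + δ) - κ π₀ + r * (d₀ - ν) * (κ₁ * κ₂ * Real.exp (κ₂ * π₀)) < 0) := by
  obtain ⟨K, hK_gt, hK_lt⟩ : ∃ K, ν * (r + δ) < K ∧ K < ν * (α + β + δ) :=
    exists_between (mul_lt_mul_of_pos_left (by linarith) hν)
  have hslope : r - K / ν + δ < 0 := by
    have : r + δ < K / ν := (lt_div_iff₀ hν).2 (by linarith)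
    linarith
  set d₀ := (1 - K) / (r - K / ν + δ)
  have hd₀ : d₀ < 0 := div_neg_of_pos_of_neg (by linarith) hslope
  have hlinear : d₀ * (r - K / ν + δ) + K - 1 = 0 := by
    rw [div_mul_cancel₀ _ hslope.ne]
    ring
  obtain ⟨κ₁, hκ₁, hκ⟩ := exists_pos_add_mul_exp_eq (hc.trans hK_gt) 1 (1 - r * d₀)
  refine ⟨d₀, κ₁, 1, hd₀, hκ₁, one_pos, ?_⟩
  simp only [hκ]
  have hκ' : r * (d₀ - ν) * (κ₁ * 1 * exp (1 * (1 - r * d₀))) < 0 :=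
    mul_neg_of_neg_of_pos (mul_neg_of_pos_of_neg hr (by linarith)) (by positivity)
  exact ⟨hlinear, by linarith, by linarith⟩

theorem stmt_5 (ν α β δ r c : ℝ) (hν : 0 < ν) (hα : 0 < α) (hβ : 0 < β)
    (hδ : 0 < δ) (hr : 0 < r) (h1 : ν * (α + β + δ) < 1) (h2 : r < α + β)
    (hc : c < ν * (r + δ)) :
    ∃ d₀ κ₁ κ₂ : ℝ, d₀ < 0 ∧ 0 < κ₁ ∧ 0 < κ₂ ∧
      (let κ : ℝ → ℝ := fun x => c + κ₁ * Real.exp (κ₂ * x)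
       let π₀ : ℝ := 1 - r * d₀
       d₀ * (r - κ π₀ / ν + δ) + κ π₀ - 1 = 0 ∧
       κ π₀ - ν * (α + β + δ) < 0 ∧
       ν * (r + δ) - κ π₀ + r * (d₀ - ν) * (κ₁ * κ₂ * Real.exp (κ₂ * π₀)) < 0) :=
  stmt_5_general ν α β δ r c hν hr h1 h2 hc
end

section
/- If d₀ < (ν(α+β+δ) - 1)/(α+β - r) with 0 < r < α+β, d₀ < ν, ν(α+β+δ) < 1, and κ(1-rd₀) = (1 - d₀(r+δ))/(1 - d₀/ν), then κ(1-rd₀) < ν(α+β+δ). -/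
theorem stmt_6_general (ν α β δ r d₀ : ℝ) (hν : 0 < ν) (h2 : r < α + β)
    (hdν : d₀ < ν)
    (hd₀ : d₀ < (ν * (α + β + δ) - 1) / (α + β - r)) :
    (1 - d₀ * (r + δ)) / (1 - d₀ / ν) < ν * (α + β + δ) := by
  have hden : 0 < 1 - d₀ / ν := sub_pos.2 ((div_lt_one hν).2 hdν)
  have hd₀' : d₀ * (α + β - r) < ν * (α + β + δ) - 1 := (lt_div_iff₀ (sub_pos.2 h2)).1 hd₀
  have hexpand : ν * (α + β + δ) * (1 - d₀ / ν) = ν * (α + β + δ) - d₀ * (α + β + δ) := by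
    field_simp
  -- after clearing the denominator the claim is `hd₀'` rearranged
  rw [div_lt_iff₀ hden, hexpand]
  linarith

theorem stmt_6 (ν α β δ r d₀ : ℝ) (hν : 0 < ν) (hα : 0 < α) (hβ : 0 < β)
    (hδ : 0 < δ) (hr : 0 < r) (h2 : r < α + β) (h1 : ν * (α + β + δ) < 1)
    (hdν : d₀ < ν)
    (hd₀ : d₀ < (ν * (α + β + δ) - 1) / (α + β - r)) :
    (1 - d₀ * (r + δ)) / (1 - d₀ / ν) < ν * (α + β + δ) :=
  stmt_6_general ν α β δ r d₀ hν h2 hdν hd₀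
end
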